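/- OPT Comparison Lemma: In the preemptive FIFO buffer model, for every initial buffer state B and every input σ, OPT(∅,σ) − v(B) ≤ OPT(B,σ) ≤ OPT(∅,σ) + v(B), where v(B) = |v(B) − v(∅)| is the total resident value of the initial buffer; that is, the optimal values starting from buffer B and from the empty buffer differ by at most the additive constant v(B). -/

import Mathlib

/-- Arrival-phase relation: `ArrStep α K ps b b'` holds iff, starting from buffer `b`,
processing the remaining arriving packets `ps` in order (each dropped or appended to the
buffer tail), with resident packets preemptible at any point, and the buffer never holding
more than `K` packets, can leave the buffer in state `b'` at the end of the arrival phase. -/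
inductive ArrStep (α : Type*) (K : ℕ) : List α → List α → List α → Prop
  | nil (b : List α) : ArrStep α K [] b b
  | preempt {ps b₁ b₂ b' : List α} (p : α) :
      ArrStep α K ps (b₁ ++ b₂) b' → ArrStep α K ps (b₁ ++ p :: b₂) b'
  | drop {ps b b' : List α} (p : α) :
      ArrStep α K ps b b' → ArrStep α K (p :: ps) b b'
  | accept {ps b b' : List α} (p : α) :
      b.length < K → ArrStep α K ps (b ++ [p]) b' → ArrStep α K (p :: ps) b b'

/-- The buffer at the beginning of time step `i` (0-indexed), given the initial buffer `B`
and the buffer states `mid` at the end of each arrival phase: the transmission phase of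
step `i - 1` removes (and transmits) the head of the buffer. -/
def bufBefore {α : Type*} {T : ℕ} (B : List α) (mid : Fin T → List α) : ℕ → List α
  | 0 => B
  | n + 1 => if h : n < T then (mid ⟨n, h⟩).tail else []

/-- A (feasible) schedule over horizon `T` on input `σ`, starting from initial buffer `B`,
with buffer capacity `K`, described by the buffer state `mid i` at the end of the arrival
phase of each time step `i`. -/
structure Schedule (α : Type*) (K T : ℕ) (σ : Fin T → List α) (B : List α) where
  mid : Fin T → List α
  valid : ∀ i : Fin T, ArrStep α K (σ i) (bufBefore B mid i.val) (mid i)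

variable {α : Type*} [DecidableEq α]

/-- The set of packets transmitted by a schedule: at each time step whose buffer is
nonempty at the end of the arrival phase, the head packet is transmitted. -/
def Schedule.trans {K T : ℕ} {σ : Fin T → List α} {B : List α}
    (S : Schedule α K T σ B) : Finset α :=
  Finset.univ.biUnion fun i : Fin T => ((S.mid i).head?).toFinset

/-- The total value transmitted by a schedule. -/
def schedVal (v : α → ℝ) {K T : ℕ} {σ : Fin T → List α} {B : List α}
    (S : Schedule α K T σ B) : ℝ :=
  ∑ p ∈ S.trans, v p

/-- `OPT v K T σ B`: the optimal (supremum) total transmitted value over all schedules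
on input `σ` starting from buffer `B`. -/
noncomputable def OPT (v : α → ℝ) (K T : ℕ) (σ : Fin T → List α) (B : List α) : ℝ :=
  sSup {x | ∃ S : Schedule α K T σ B, x = schedVal v S}

/-- The set of packets arriving in the input `σ`. -/
def arrivals {T : ℕ} (σ : Fin T → List α) : Finset α :=
  Finset.univ.biUnion fun i : Fin T => (σ i).toFinset

/-- The total value of the packets residing in a buffer. -/
def bufVal (v : α → ℝ) (B : List α) : ℝ := (B.map v).sum

/-- The list of all packets of the instance: initial buffer contents plus all arrivals. -/
def instanceList {T : ℕ} (σ : Fin T → List α) (B : List α) : List α :=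
  B ++ ((List.finRange T).map σ).flatten

/-!
Starting from `B` can only help: a schedule from the empty buffer becomes a schedule from `B`
by preempting all of `B` in the first arrival phase. Conversely, a schedule `S` from `B` is
simulated from the empty buffer by running `S` with the packets of `B`, and those the simulation
has already transmitted, filtered out of every buffer. Filtering commutes with the arrival
moves, and every packet `S` transmits is either in `B` or has been transmitted by the
simulation no later than by `S`, so `v(S) ≤ v(B) + v(simulation)`.
-/

section

variable {α : Type*}

theorem List.tail_filter_sublist_tail_filter {l : List α} {p q : α → Bool}
    (hqp : ∀ x, q x → p x) (hhead : ∀ x ∈ (l.filter p).head?, q x = false) :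
    (l.tail.filter q).Sublist (l.filter p).tail := by
  have hfilter : l.filter q = (l.filter p).filter q := by
    rw [List.filter_filter]
    congr 1
    funext x
    cases hx : q x <;> simp [hqp x, hx]
  refine (l.tail_sublist.filter q).trans (hfilter ▸ ?_)
  cases h : l.filter p with
  | nil => simp
  | cons a t => simp [h, hhead a]

theorem Finset.sum_union_le_sum_add_sum {ι M : Type*} [DecidableEq ι] [AddCommMonoid M]
    [PartialOrder M] [IsOrderedAddMonoid M] {s t : Finset ι} {f : ι → M}
    (hf : ∀ i ∈ s ∩ t, 0 ≤ f i) : ∑ i ∈ s ∪ t, f i ≤ ∑ i ∈ s, f i + ∑ i ∈ t, f i := by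
  rw [← Finset.sum_union_inter]
  exact le_add_of_nonneg_right (Finset.sum_nonneg hf)

theorem List.sum_toFinset_le_sum_map {ι M : Type*} [DecidableEq ι] [AddCommMonoid M]
    [PartialOrder M] [IsOrderedAddMonoid M] {l : List ι} {f : ι → M}
    (hf : ∀ i ∈ l, 0 ≤ f i) : ∑ i ∈ l.toFinset, f i ≤ (l.map f).sum := by
  rw [Finset.sum_list_map_count]
  refine Finset.sum_le_sum fun i hi => ?_
  rw [List.mem_toFinset] at hi
  exact le_smul_of_one_le_left (hf i hi) (List.count_pos_iff.mpr hi)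

namespace ArrStep

variable {K : ℕ} {ps b b' : List α}

theorem drop_all (ps : List α) : ArrStep α K ps [] [] := by
  induction ps with
  | nil => exact nil []
  | cons p ps ih => exact drop p ih

theorem of_sublist {c : List α} (h : ArrStep α K ps b b') (hbc : b.Sublist c) :
    ArrStep α K ps c b' := by
  suffices ∀ pre, ArrStep α K ps (pre ++ b) b' → ArrStep α K ps (pre ++ c) b' by
    simpa using this [] h
  clear h
  induction hbc with
  | slnil => exact fun _ => id
  | cons a _ ih => exact fun pre h => preempt a (ih pre h)
  | cons_cons a _ ih => exact fun pre h => by simpa using ih (pre ++ [a]) (by simpa using h)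

theorem filter (h : ArrStep α K ps b b') (p : α → Bool) :
    ArrStep α K ps (b.filter p) (b'.filter p) := by
  induction h with
  | nil b => exact nil _
  | preempt q _ ih =>
    by_cases hq : p q
    · simpa [List.filter_append, hq] using preempt q (by simpa [List.filter_append] using ih)
    · simpa [List.filter_append, hq] using ih
  | drop q _ ih => exact drop q ih
  | accept q hK _ ih =>
    by_cases hq : p q
    · refine accept q ((List.length_filter_le p _).trans_lt hK) ?_
      simpa [List.filter_append, hq] using ih
    · exact drop q (by simpa [List.filter_append, hq] using ih)

theorem subset (h : ArrStep α K ps b b') : b' ⊆ b ++ ps := by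
  induction h with
  | nil b => simp
  | preempt q _ ih =>
    refine List.Subset.trans ih fun x hx => ?_
    simp only [List.mem_append, List.mem_cons] at hx ⊢
    tauto
  | drop q _ ih =>
    refine List.Subset.trans ih fun x hx => ?_
    simp only [List.mem_append, List.mem_cons] at hx ⊢
    tauto
  | accept q _ _ ih => simpa using ih

end ArrStep

theorem mem_instanceList_of_mem {T : ℕ} {σ : Fin T → List α} {B : List α} {x : α}
    {i : Fin T} (hx : x ∈ σ i) : x ∈ instanceList σ B := by
  simp only [instanceList, List.mem_append, List.mem_flatten, List.mem_map, List.mem_finRange,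
    true_and]
  exact Or.inr ⟨σ i, ⟨i, rfl⟩, hx⟩

theorem bufBefore_nil_sublist {T : ℕ} (B : List α) (mid : Fin T → List α) (n : ℕ) :
    (bufBefore [] mid n).Sublist (bufBefore B mid n) := by
  cases n <;> simp [bufBefore]

namespace Schedule

variable {K T : ℕ} {σ : Fin T → List α} {B : List α}

instance : Nonempty (Schedule α K T σ B) :=
  ⟨⟨fun _ => [], fun _ => (ArrStep.drop_all _).of_sublist (List.nil_sublist _)⟩⟩

def withInitial (S : Schedule α K T σ []) (B : List α) : Schedule α K T σ B :=
  ⟨S.mid, fun i => (S.valid i).of_sublist (bufBefore_nil_sublist B S.mid i)⟩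

def midAt (S : Schedule α K T σ B) (n : ℕ) : List α :=
  if h : n < T then S.mid ⟨n, h⟩ else []

theorem midAt_of_lt (S : Schedule α K T σ B) {n : ℕ} (h : n < T) :
    S.midAt n = S.mid ⟨n, h⟩ := dif_pos h

theorem bufBefore_succ (S : Schedule α K T σ B) (n : ℕ) :
    bufBefore B S.mid (n + 1) = (S.midAt n).tail := by
  simp only [bufBefore, midAt]
  split <;> rfl

theorem midAt_subset (S : Schedule α K T σ B) (n : ℕ) :
    S.midAt n ⊆ instanceList σ B := by
  intro x hx
  rw [midAt] at hx
  split_ifs at hx with h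
  · rcases List.mem_append.mp ((S.valid ⟨n, h⟩).subset hx) with hbuf | harr
    · cases n with
      | zero => exact List.mem_append_left _ hbuf
      | succ n =>
        rw [bufBefore_succ] at hbuf
        exact midAt_subset S n (List.mem_of_mem_tail hbuf)
    · exact mem_instanceList_of_mem harr
  · simp at hx

variable [DecidableEq α]

theorem mem_trans {S : Schedule α K T σ B} {p : α} :
    p ∈ S.trans ↔ ∃ i, (S.mid i).head? = some p := by
  simp [Schedule.trans]

theorem trans_subset_instanceList (S : Schedule α K T σ B) :
    S.trans ⊆ (instanceList σ B).toFinset := by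
  intro p hp
  obtain ⟨i, hi⟩ := mem_trans.mp hp
  rw [List.mem_toFinset]
  exact S.midAt_subset i (by rw [S.midAt_of_lt i.isLt]; exact List.mem_of_head? hi)

theorem schedVal_le_sum_instanceList (v : α → ℝ) (hv : ∀ p, 0 ≤ v p)
    (S : Schedule α K T σ B) : schedVal v S ≤ ∑ p ∈ (instanceList σ B).toFinset, v p :=
  Finset.sum_le_sum_of_subset_of_nonneg S.trans_subset_instanceList fun p _ _ => hv p

/-- The packets the purged schedule ignores at step `n`: those of `B` and those it has
transmitted before step `n`. -/
def removed (S : Schedule α K T σ B) : ℕ → Finset α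
  | 0 => B.toFinset
  | n + 1 => S.removed n ∪ ((S.midAt n).filter (· ∉ S.removed n)).head?.toFinset

theorem arrStep_filter_removed (S : Schedule α K T σ B) (i : Fin T) :
    ArrStep α K (σ i) (bufBefore [] (fun j => (S.mid j).filter (· ∉ S.removed j)) i)
      ((S.mid i).filter (· ∉ S.removed i)) := by
  obtain ⟨_ | n, h⟩ := i
  · have hB : B.filter (· ∉ S.removed 0) = [] := by simp [removed]
    have h0 := (S.valid ⟨0, h⟩).filter (· ∉ S.removed 0)
    rwa [show bufBefore B S.mid 0 = B from rfl, hB] at h0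
  · have hn : n < T := by omega
    refine ((S.valid ⟨n + 1, h⟩).filter (· ∉ S.removed (n + 1))).of_sublist ?_
    simp only [bufBefore, dif_pos hn]
    apply List.tail_filter_sublist_tail_filter
    · intro x hx
      simp_all [removed]
    · intro x hx
      rw [decide_eq_false_iff_not, not_not, removed, midAt_of_lt S hn]
      exact Finset.mem_union_right _ (Option.mem_toFinset.mpr hx)

def purged (S : Schedule α K T σ B) : Schedule α K T σ [] :=
  ⟨fun i => (S.mid i).filter (· ∉ S.removed i), S.arrStep_filter_removed⟩

theorem removed_subset (S : Schedule α K T σ B) (n : ℕ) :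
    S.removed n ⊆ B.toFinset ∪ S.purged.trans := by
  induction n with
  | zero => exact Finset.subset_union_left
  | succ n ih =>
    refine Finset.union_subset ih fun x hx => ?_
    rw [Option.mem_toFinset, midAt] at hx
    split_ifs at hx with h
    · exact Finset.mem_union_right _ (mem_trans.mpr ⟨⟨n, h⟩, hx⟩)
    · simp at hx

theorem trans_subset_purged (S : Schedule α K T σ B) :
    S.trans ⊆ B.toFinset ∪ S.purged.trans := by
  intro p hp
  obtain ⟨i, hi⟩ := mem_trans.mp hp
  by_cases hr : p ∈ S.removed i
  · exact S.removed_subset i hr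
  · refine Finset.mem_union_right _ (mem_trans.mpr ⟨i, ?_⟩)
    obtain ⟨t, ht⟩ := List.head?_eq_some_iff.mp hi
    simp [purged, ht, hr]

theorem schedVal_le_bufVal_add_purged (v : α → ℝ) (hv : ∀ p, 0 ≤ v p)
    (S : Schedule α K T σ B) : schedVal v S ≤ bufVal v B + schedVal v S.purged :=
  calc schedVal v S ≤ ∑ p ∈ B.toFinset ∪ S.purged.trans, v p :=
        Finset.sum_le_sum_of_subset_of_nonneg S.trans_subset_purged fun p _ _ => hv p
    _ ≤ ∑ p ∈ B.toFinset, v p + schedVal v S.purged :=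
        Finset.sum_union_le_sum_add_sum fun p _ => hv p
    _ ≤ bufVal v B + schedVal v S.purged :=
        add_le_add (List.sum_toFinset_le_sum_map fun p _ => hv p) le_rfl

end Schedule

variable [DecidableEq α] (v : α → ℝ) {K T : ℕ} {σ : Fin T → List α} {B : List α}

theorem le_OPT (hv : ∀ p, 0 ≤ v p) (S : Schedule α K T σ B) : schedVal v S ≤ OPT v K T σ B :=
  le_csSup ⟨_, by rintro _ ⟨S', rfl⟩; exact S'.schedVal_le_sum_instanceList v hv⟩ ⟨S, rfl⟩

theorem OPT_le {c : ℝ} (h : ∀ S : Schedule α K T σ B, schedVal v S ≤ c) : OPT v K T σ B ≤ c := by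
  obtain ⟨S⟩ : Nonempty (Schedule α K T σ B) := inferInstance
  exact csSup_le ⟨_, S, rfl⟩ (by rintro _ ⟨S, rfl⟩; exact h S)

end

theorem OPT_comparison_general
    (v : α → ℝ) (hv : ∀ p, 0 ≤ v p) (K T : ℕ)
    (σ : Fin T → List α) (B : List α) :
    OPT v K T σ [] - bufVal v B ≤ OPT v K T σ B ∧
      OPT v K T σ B ≤ OPT v K T σ [] + bufVal v B := by
  have hB : 0 ≤ bufVal v B := List.sum_nonneg (by simpa using fun p _ => hv p)
  have hlower : OPT v K T σ [] ≤ OPT v K T σ B :=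
    OPT_le v fun S => le_OPT v hv (S.withInitial B)
  have hupper : OPT v K T σ B ≤ bufVal v B + OPT v K T σ [] :=
    OPT_le v fun S => (S.schedVal_le_bufVal_add_purged v hv).trans
      (add_le_add le_rfl (le_OPT v hv S.purged))
  constructor <;> linarith

/-- OPT Comparison Lemma: the optimal values starting from buffer `B` and from the empty
buffer differ by at most the additive constant `ε = v(B) = |v(B) - v(∅)|`, the total
resident value of the initial buffer:
`OPT(∅, σ) − v(B) ≤ OPT(B, σ) ≤ OPT(∅, σ) + v(B)`. -/
theorem OPT_comparison
    (v : α → ℝ) (hv : ∀ p, 0 ≤ v p) (K T : ℕ)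
    (σ : Fin T → List α) (B : List α)
    (hB : B.length ≤ K) (hnd : (instanceList σ B).Nodup) :
    OPT v K T σ [] - bufVal v B ≤ OPT v K T σ B ∧
      OPT v K T σ B ≤ OPT v K T σ [] + bufVal v B :=
  OPT_comparison_general v hv K T σ B
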